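/- With notation as in the bijection construction: Φ(Θ(T')) = T' for every spanning tree T' of G rooted at 0; hence Θ is a bijection between the set of spanning trees of G rooted at 0 and the set of G-parking functions. -/

import Mathlib

open Finset

open scoped Classical

/-- A subtree of the digraph (with multiplicity function `E`) on vertices
`{0,...,n}`, rooted at `0`: every non-root vertex of the subtree has a unique
outgoing edge (its parent together with the index of a parallel edge), and
iterating parents reaches the root. -/
structure Subtree (n : ℕ) (E : Fin (n+1) → Fin (n+1) → ℕ) where
  par : Fin (n+1) → Option (Fin (n+1) × ℕ)
  root_par : par 0 = none
  edge_valid : ∀ v p k, par v = some (p, k) → k < E v p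
  parent_mem : ∀ v p k, par v = some (p, k) → p = 0 ∨ (par p).isSome
  reaches : ∀ v, (par v).isSome →
    Relation.ReflTransGen (fun a c => ∃ k, par a = some (c, k)) v 0

noncomputable def Subtree.verts {n : ℕ} {E : Fin (n+1) → Fin (n+1) → ℕ}
    (t : Subtree n E) : Finset (Fin (n+1)) :=
  Finset.univ.filter (fun v => v = 0 ∨ (t.par v).isSome)

def Subtree.IsSubtreeOf {n : ℕ} {E : Fin (n+1) → Fin (n+1) → ℕ}
    (t T : Subtree n E) : Prop :=
  ∀ v, (t.par v).isSome → t.par v = T.par v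

def Subtree.IsSpanning {n : ℕ} {E : Fin (n+1) → Fin (n+1) → ℕ}
    (T : Subtree n E) : Prop :=
  ∀ v, v ∈ T.verts

/-- `b` is a `G`-parking function: for every non-empty set `U` of non-root
vertices there is `j ∈ U` with more than `b j` edges from `j` to the
complement of `U`. (The value `b 0` at the root is irrelevant.) -/
def IsParking {n : ℕ} (E : Fin (n+1) → Fin (n+1) → ℕ) (b : Fin (n+1) → ℕ) : Prop :=
  ∀ U : Finset (Fin (n+1)), U.Nonempty → 0 ∉ U → ∃ j ∈ U, b j < ∑ i ∈ Uᶜ, E j i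

/-- An assignment of a relation on vertices to every rooted subtree. -/
structure TreeOrders (n : ℕ) (E : Fin (n+1) → Fin (n+1) → ℕ) where
  lt : Subtree n E → Fin (n+1) → Fin (n+1) → Prop

/-- A proper set of tree orders: each `lt T` is a strict total order on the
vertices of `T`, parents are smaller than children, and the orders are
consistent under restriction to rooted subtrees. -/
def TreeOrders.Proper {n : ℕ} {E : Fin (n+1) → Fin (n+1) → ℕ}
    (P : TreeOrders n E) : Prop :=
  (∀ T : Subtree n E, ∀ i ∈ T.verts, ¬ P.lt T i i) ∧
  (∀ T : Subtree n E, ∀ i ∈ T.verts, ∀ j ∈ T.verts, ∀ l ∈ T.verts,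
     P.lt T i j → P.lt T j l → P.lt T i l) ∧
  (∀ T : Subtree n E, ∀ i ∈ T.verts, ∀ j ∈ T.verts, i ≠ j → P.lt T i j ∨ P.lt T j i) ∧
  (∀ T : Subtree n E, ∀ j q k, T.par j = some (q, k) → P.lt T q j) ∧
  (∀ t T : Subtree n E, t.IsSubtreeOf T →
     ∀ i ∈ t.verts, ∀ j ∈ t.verts, (P.lt t i j ↔ P.lt T i j))

/-- The number of edges out of `j` that are smaller (w.r.t. the order `lt` on
targets, parallel edges broken by their index) than the edge `(j,q)` with
parallel index `k`. -/
noncomputable def thetaVal {n : ℕ} (E : Fin (n+1) → Fin (n+1) → ℕ)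
    (lt : Fin (n+1) → Fin (n+1) → Prop) (j q : Fin (n+1)) (k : ℕ) : ℕ :=
  (∑ i ∈ Finset.univ.filter (fun i => lt i q), E j i) + k

/-- The map Θ: given a tree order assignment, send a tree to the tuple whose
`j`-th entry counts the edges out of `j` smaller than the tree edge out of `j`. -/
noncomputable def Theta {n : ℕ} (E : Fin (n+1) → Fin (n+1) → ℕ)
    (P : TreeOrders n E) (T : Subtree n E) : Fin (n+1) → ℕ :=
  fun j => match T.par j with
  | none => 0
  | some (q, k) => thetaVal E (P.lt T) j q k

/-- `(q,k)` is the edge from `j` into the vertex set `S` such that exactly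
`bj` edges from `j` into `S` are smaller than it (w.r.t. `lt`, parallel edges
broken by index). -/
def ChosenEdge {n : ℕ} (E : Fin (n+1) → Fin (n+1) → ℕ) (S : Finset (Fin (n+1)))
    (lt : Fin (n+1) → Fin (n+1) → Prop) (bj : ℕ) (j q : Fin (n+1)) (k : ℕ) : Prop :=
  q ∈ S ∧ k < E j q ∧ (∑ i ∈ S.filter (fun i => lt i q), E j i) + k = bj

/-- A run of the inductive construction of Φ(b): start with the tree on the
root alone; at step `m` consider the set `V_m` of vertices `j` outside
`t (m-1)` with at least `b j + 1` edges into `t (m-1)`, adjoin all of them by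
their chosen edges to form an auxiliary tree, and let `p m` be the smallest
vertex of `V_m` in the order of that auxiliary tree; `t m` is `t (m-1)` with
`p m` adjoined by its chosen edge. -/
structure PhiRun {n : ℕ} (E : Fin (n+1) → Fin (n+1) → ℕ) (P : TreeOrders n E)
    (b : Fin (n+1) → ℕ) where
  t : ℕ → Subtree n E
  p : ℕ → Fin (n+1)
  init : ∀ v, (t 0).par v = none
  p0 : p 0 = 0
  sub : ∀ m, 1 ≤ m → m ≤ n → (t (m-1)).IsSubtreeOf (t m)
  newvert : ∀ m, 1 ≤ m → m ≤ n → p m ∉ (t (m-1)).verts ∧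
      ∀ v, v ≠ p m → (t m).par v = (t (m-1)).par v
  eligible : ∀ m, 1 ≤ m → m ≤ n →
      b (p m) + 1 ≤ ∑ i ∈ (t (m-1)).verts, E (p m) i
  chosen : ∀ m, 1 ≤ m → m ≤ n → ∃ q k, (t m).par (p m) = some (q, k) ∧
      ChosenEdge E (t (m-1)).verts (P.lt (t (m-1))) (b (p m)) (p m) q k
  minimal : ∀ m, 1 ≤ m → m ≤ n → ∃ taux : Subtree n E,
      (t (m-1)).IsSubtreeOf taux ∧
      (∀ j, j ∈ taux.verts ↔ (j ∈ (t (m-1)).verts ∨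
          (j ∉ (t (m-1)).verts ∧ b j + 1 ≤ ∑ i ∈ (t (m-1)).verts, E j i))) ∧
      (∀ j, j ∉ (t (m-1)).verts → b j + 1 ≤ ∑ i ∈ (t (m-1)).verts, E j i →
        ∃ q k, taux.par j = some (q, k) ∧
          ChosenEdge E (t (m-1)).verts (P.lt (t (m-1))) (b j) j q k) ∧
      (∀ j, j ∉ (t (m-1)).verts → b j + 1 ≤ ∑ i ∈ (t (m-1)).verts, E j i →
        j ≠ p m → P.lt taux (p m) j)

/-! Run Φ on `b = Θ(T)`. By induction each intermediate tree `t_m` is a subtree of `T` whose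
vertex set is an initial segment of `T`'s order. Since `b_j = Θ(T)_j` only counts edges into
vertices below `j`'s parent, every edge Φ chooses out of a vertex outside `t_m` is the `T`-edge;
so the auxiliary tree lies inside `T`, the consistency of the orders makes Φ's next vertex the
`T`-least vertex outside `t_m`, and that vertex is eligible because its parent and everything
below the parent lie in `t_m`. Hence Φ(Θ(T)) = T, so Θ is injective. The same induction, run
against the output `Φ(b)` itself, shows Θ(Φ(b)) = b for every parking function `b`; and Θ(T) is
a parking function by the same count at the `T`-least vertex of a set `U`. -/

section StrictTotalOn

variable {α : Type*}

theorem sum_add_lt_sum_of_insert_subset [DecidableEq α] {A B : Finset α} {f : α → ℕ} {q : α}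
    {k : ℕ} (hqA : q ∉ A) (hAB : insert q A ⊆ B) (hk : k < f q) :
    ∑ a ∈ A, f a + k < ∑ a ∈ B, f a :=
  calc ∑ a ∈ A, f a + k < ∑ a ∈ insert q A, f a := by rw [sum_insert hqA]; omega
    _ ≤ ∑ a ∈ B, f a := sum_le_sum_of_subset hAB

structure IsStrictTotalOn (r : α → α → Prop) (S : Finset α) : Prop where
  irrefl : ∀ a ∈ S, ¬ r a a
  trans : ∀ a ∈ S, ∀ b ∈ S, ∀ c ∈ S, r a b → r b c → r a c
  total : ∀ a ∈ S, ∀ b ∈ S, a ≠ b → r a b ∨ r b a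

def IsInitial (r : α → α → Prop) (S : Finset α) : Prop :=
  ∀ a ∈ S, ∀ b ∉ S, r a b

namespace IsStrictTotalOn

variable {r : α → α → Prop} {S A : Finset α} {a b : α}

theorem mono (h : IsStrictTotalOn r A) (hSA : S ⊆ A) : IsStrictTotalOn r S where
  irrefl a ha := h.irrefl a (hSA ha)
  trans a ha b hb c hc := h.trans a (hSA ha) b (hSA hb) c (hSA hc)
  total a ha b hb := h.total a (hSA ha) b (hSA hb)

theorem asymm (h : IsStrictTotalOn r S) (ha : a ∈ S) (hb : b ∈ S) (hab : r a b) : ¬ r b a :=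
  fun hba => h.irrefl a ha (h.trans a ha b hb a ha hab hba)

theorem ne_of_rel (h : IsStrictTotalOn r S) (ha : a ∈ S) (hab : r a b) : a ≠ b := by
  rintro rfl
  exact h.irrefl a ha hab

/-- The least element is the one with the fewest elements of `S` below it. -/
theorem exists_least (h : IsStrictTotalOn r S) (hS : S.Nonempty) :
    ∃ a ∈ S, ∀ b ∈ S, b ≠ a → r a b := by
  obtain ⟨a, ha, hmin⟩ := S.exists_min_image (fun a => #(S.filter (r · a))) hS
  refine ⟨a, ha, fun b hb hba => (h.total a ha b hb hba.symm).resolve_right fun hba' => ?_⟩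
  have hlt : #(S.filter (r · b)) < #(S.filter (r · a)) := by
    refine card_lt_card ((ssubset_iff_of_subset fun x hx => ?_).2 ⟨b, ?_, ?_⟩)
    · rw [mem_filter] at hx ⊢
      exact ⟨hx.1, h.trans x hx.1 b hb a ha hx.2 hba'⟩
    · exact mem_filter.2 ⟨hb, hba'⟩
    · exact fun hb' => h.irrefl b hb (mem_filter.1 hb').2
  exact (hmin b hb).not_gt hlt

theorem sum_filter_add_lt (h : IsStrictTotalOn r S) (f : α → ℕ) {q q' : α} {k : ℕ}
    (hq : q ∈ S) (hq' : q' ∈ S) (hqq' : r q q') (hk : k < f q) :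
    ∑ a ∈ S.filter (r · q), f a + k < ∑ a ∈ S.filter (r · q'), f a := by
  refine sum_add_lt_sum_of_insert_subset (fun hqq => h.irrefl q hq (mem_filter.1 hqq).2)
    (insert_subset_iff.2 ⟨mem_filter.2 ⟨hq, hqq'⟩, fun x hx => ?_⟩) hk
  rw [mem_filter] at hx ⊢
  exact ⟨hx.1, h.trans x hx.1 q hq q' hq' hx.2 hqq'⟩

theorem eq_of_sum_filter_add_eq (h : IsStrictTotalOn r S) (f : α → ℕ) {q q' : α} {k k' : ℕ}
    (hq : q ∈ S) (hq' : q' ∈ S) (hk : k < f q) (hk' : k' < f q')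
    (heq : ∑ a ∈ S.filter (r · q), f a + k = ∑ a ∈ S.filter (r · q'), f a + k') :
    q = q' ∧ k = k' := by
  rcases eq_or_ne q q' with rfl | hne
  · exact ⟨rfl, by omega⟩
  · rcases h.total q hq q' hq' hne with hlt | hlt
    · have := h.sum_filter_add_lt f hq hq' hlt hk
      omega
    · have := h.sum_filter_add_lt f hq' hq hlt hk'
      omega

/-- Peel off the least element `a`: either `c` falls among the `f a` slots of `a`, or recurse
on `S \ {a}` with `c - f a`. -/
theorem exists_sum_filter_add_eq (h : IsStrictTotalOn r S) (f : α → ℕ) {c : ℕ}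
    (hc : c < ∑ a ∈ S, f a) :
    ∃ q ∈ S, ∃ k < f q, ∑ a ∈ S.filter (r · q), f a + k = c := by
  induction S using Finset.strongInduction generalizing c with
  | H S ih =>
  obtain ⟨a, ha, hleast⟩ := h.exists_least (nonempty_of_sum_ne_zero (f := f) (by omega))
  have hbelow : S.filter (r · a) = ∅ := filter_eq_empty_iff.2 fun x hx hxa =>
    h.asymm hx ha hxa (hleast x hx (h.ne_of_rel hx hxa))
  by_cases hca : c < f a
  · exact ⟨a, ha, c, hca, by simp [hbelow]⟩
  have hsum := add_sum_erase S f ha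
  obtain ⟨q, hq, k, hk, hqk⟩ := ih (S.erase a) (erase_ssubset ha)
    (h.mono (erase_subset a S)) (c := c - f a) (by omega)
  have hqa : q ≠ a := ne_of_mem_erase hq
  have hfilter : S.filter (r · q) = insert a ((S.erase a).filter (r · q)) := by
    rw [filter_erase, insert_erase (mem_filter.2 ⟨ha, hleast q (mem_of_mem_erase hq) hqa⟩)]
  refine ⟨q, mem_of_mem_erase hq, k, hk, ?_⟩
  rw [hfilter, sum_insert (by simp)]
  omega

end IsStrictTotalOn

theorem IsInitial.filter_eq {r : α → α → Prop} {S A : Finset α}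
    (hS : IsInitial r S) (hA : IsStrictTotalOn r A) (hSA : S ⊆ A) {q : α} (hq : q ∈ S) :
    A.filter (r · q) = S.filter (r · q) := by
  ext i
  simp only [mem_filter]
  refine ⟨fun ⟨hi, hiq⟩ => ⟨?_, hiq⟩, fun ⟨hi, hiq⟩ => ⟨hSA hi, hiq⟩⟩
  by_contra hiS
  exact hA.asymm (hSA hq) hi (hS q hq i hiS) hiq

end StrictTotalOn


section ChosenEdge

variable {n : ℕ} {E : Fin (n+1) → Fin (n+1) → ℕ} {S : Finset (Fin (n+1))}
  {lt : Fin (n+1) → Fin (n+1) → Prop} {bj : ℕ} {j q q' : Fin (n+1)} {k k' : ℕ}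

theorem ChosenEdge.exists (h : IsStrictTotalOn lt S) (hbj : bj < ∑ i ∈ S, E j i) :
    ∃ q k, ChosenEdge E S lt bj j q k :=
  let ⟨q, hq, k, hk, hsum⟩ := h.exists_sum_filter_add_eq (E j) hbj
  ⟨q, k, hq, hk, hsum⟩

theorem ChosenEdge.unique (h : IsStrictTotalOn lt S) (h₁ : ChosenEdge E S lt bj j q k)
    (h₂ : ChosenEdge E S lt bj j q' k') : q = q' ∧ k = k' :=
  h.eq_of_sum_filter_add_eq (E j) h₁.1 h₂.1 h₁.2.1 h₂.2.1 (h₁.2.2.trans h₂.2.2.symm)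

end ChosenEdge

namespace Subtree

variable {n : ℕ} {E : Fin (n+1) → Fin (n+1) → ℕ} {t u T : Subtree n E} {v q : Fin (n+1)}
  {k : ℕ}

theorem mem_verts : v ∈ t.verts ↔ v = 0 ∨ (t.par v).isSome := by
  simp [verts]

theorem zero_mem_verts (t : Subtree n E) : 0 ∈ t.verts :=
  mem_verts.2 (.inl rfl)

theorem mem_verts_of_par (h : t.par v = some (q, k)) : v ∈ t.verts :=
  mem_verts.2 (.inr (by simp [h]))

theorem parent_mem_verts (h : t.par v = some (q, k)) : q ∈ t.verts := by
  rcases t.parent_mem v q k h with rfl | hq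
  · exact t.zero_mem_verts
  · exact mem_verts.2 (.inr hq)

theorem ne_zero_of_par (h : t.par v = some (q, k)) : v ≠ 0 := by
  rintro rfl
  simp [t.root_par] at h

theorem isSome_par_of_mem (hv : v ∈ t.verts) (hv0 : v ≠ 0) : (t.par v).isSome :=
  (mem_verts.1 hv).resolve_left hv0

theorem exists_par_of_mem (hv : v ∈ t.verts) (hv0 : v ≠ 0) :
    ∃ q k, t.par v = some (q, k) := by
  obtain ⟨⟨q, k⟩, h⟩ := Option.isSome_iff_exists.1 (isSome_par_of_mem hv hv0)
  exact ⟨q, k, h⟩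

theorem verts_eq_singleton (h : ∀ v, t.par v = none) : t.verts = {0} := by
  ext v
  simp [mem_verts, h]

theorem ext (h : t.par = T.par) : t = T := by
  cases t; cases T; cases h; rfl

theorem IsSubtreeOf.refl (t : Subtree n E) : t.IsSubtreeOf t := fun _ _ => rfl

theorem IsSubtreeOf.trans (h₁ : t.IsSubtreeOf u) (h₂ : u.IsSubtreeOf T) : t.IsSubtreeOf T :=
  fun v hv => (h₁ v hv).trans (h₂ v (h₁ v hv ▸ hv))

theorem IsSubtreeOf.verts_subset (h : t.IsSubtreeOf T) : t.verts ⊆ T.verts := by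
  intro v hv
  rcases mem_verts.1 hv with rfl | hs
  · exact T.zero_mem_verts
  · exact mem_verts.2 (.inr (h v hs ▸ hs))

def bot (n : ℕ) (E : Fin (n+1) → Fin (n+1) → ℕ) : Subtree n E where
  par _ := none
  root_par := rfl
  edge_valid _ _ _ h := nomatch h
  parent_mem _ _ _ h := nomatch h
  reaches _ h := nomatch h

def attach (t : Subtree n E) (V : Finset (Fin (n+1))) (e : Fin (n+1) → Fin (n+1) × ℕ)
    (he : ∀ j ∈ V, j ∉ t.verts ∧ (e j).1 ∈ t.verts ∧ (e j).2 < E j (e j).1) :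
    Subtree n E where
  par j := if j ∈ V then some (e j) else t.par j
  root_par := by rw [if_neg fun h0 => (he 0 h0).1 t.zero_mem_verts, t.root_par]
  edge_valid v p k h := by
    split_ifs at h with hv
    · simpa only [Option.some.inj h] using (he v hv).2.2
    · exact t.edge_valid v p k h
  parent_mem v p k h := by
    have hp : p ∈ t.verts := by
      split_ifs at h with hv
      · simpa only [Option.some.inj h] using (he v hv).2.1
      · exact parent_mem_verts h
    rcases mem_verts.1 hp with hp0 | hsome
    · exact .inl hp0
    · exact .inr (by rwa [if_neg fun hpV => (he p hpV).1 hp])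
  reaches v hv := by
    have hroot : ∀ c ∈ t.verts, Relation.ReflTransGen
        (fun a c => ∃ k, (if a ∈ V then some (e a) else t.par a) = some (c, k)) c 0 := by
      intro c hc
      rcases mem_verts.1 hc with rfl | hsome
      · exact .refl
      · refine Relation.ReflTransGen.mono (fun a c ⟨k, hk⟩ => ⟨k, ?_⟩) _ _
          (t.reaches c hsome)
        rwa [if_neg fun haV => (he a haV).1 (mem_verts_of_par hk)]
    split_ifs at hv with hvV
    · exact .head ⟨(e v).2, if_pos hvV⟩ (hroot _ (he v hvV).2.1)
    · exact hroot v (mem_verts.2 (.inr hv))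

variable {V : Finset (Fin (n+1))} {e : Fin (n+1) → Fin (n+1) × ℕ}
  {he : ∀ j ∈ V, j ∉ t.verts ∧ (e j).1 ∈ t.verts ∧ (e j).2 < E j (e j).1}

theorem attach_par_of_mem (hv : v ∈ V) : (t.attach V e he).par v = some (e v) :=
  if_pos hv

theorem attach_par_of_notMem (hv : v ∉ V) : (t.attach V e he).par v = t.par v :=
  if_neg hv

theorem mem_attach_verts : v ∈ (t.attach V e he).verts ↔ v ∈ t.verts ∨ v ∈ V := by
  by_cases hv : v ∈ V
  · simp only [hv, or_true, iff_true]
    exact mem_verts_of_par (attach_par_of_mem hv)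
  · rw [mem_verts, attach_par_of_notMem hv, ← mem_verts]
    simp [hv]

theorem isSubtreeOf_attach : t.IsSubtreeOf (t.attach V e he) := fun v hv =>
  (attach_par_of_notMem fun hvV => (he v hvV).1 (mem_verts.2 (.inr hv))).symm

end Subtree

namespace TreeOrders.Proper

open Subtree

variable {n : ℕ} {E : Fin (n+1) → Fin (n+1) → ℕ} {P : TreeOrders n E}
  {t T : Subtree n E} {i j q : Fin (n+1)} {k bj : ℕ}

theorem isStrictTotalOn (hP : P.Proper) (T : Subtree n E) : IsStrictTotalOn (P.lt T) T.verts :=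
  ⟨hP.1 T, hP.2.1 T, hP.2.2.1 T⟩

theorem isStrictTotalOn_univ (hP : P.Proper) (hT : T.IsSpanning) : IsStrictTotalOn (P.lt T) univ :=
  (hP.isStrictTotalOn T).mono fun v _ => hT v

theorem lt_of_par (hP : P.Proper) (h : T.par j = some (q, k)) : P.lt T q j :=
  hP.2.2.2.1 T j q k h

theorem lt_iff_of_isSubtreeOf (hP : P.Proper) (h : t.IsSubtreeOf T) (hi : i ∈ t.verts)
    (hj : j ∈ t.verts) :
    P.lt t i j ↔ P.lt T i j :=
  hP.2.2.2.2 t T h i hi j hj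

theorem root_lt (hP : P.Proper) (hj : j ∈ T.verts) (hj0 : j ≠ 0) : P.lt T 0 j := by
  suffices ∀ a, Relation.ReflTransGen (fun a c => ∃ k, T.par a = some (c, k)) a 0 →
      a = 0 ∨ P.lt T 0 a from (this j (T.reaches j (isSome_par_of_mem hj hj0))).resolve_left hj0
  intro a ha
  induction ha using Relation.ReflTransGen.head_induction_on with
  | refl => exact .inl rfl
  | head hac _ ih =>
    obtain ⟨k, hk⟩ := hac
    refine .inr ?_
    rcases ih with rfl | h0c
    · exact hP.lt_of_par hk
    · exact (hP.isStrictTotalOn T).trans _ T.zero_mem_verts _ (parent_mem_verts hk) _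
        (mem_verts_of_par hk) h0c (hP.lt_of_par hk)

theorem chosenEdge_of_isSubtreeOf (hP : P.Proper) (h : t.IsSubtreeOf T)
    (hch : ChosenEdge E t.verts (P.lt t) bj j q k) : ChosenEdge E t.verts (P.lt T) bj j q k := by
  refine ⟨hch.1, hch.2.1, ?_⟩
  rw [← hch.2.2]
  congr 2
  exact filter_congr fun i hi => (hP.lt_iff_of_isSubtreeOf h hi hch.1).symm

end TreeOrders.Proper

section Theta

open Subtree

variable {n : ℕ} {E : Fin (n+1) → Fin (n+1) → ℕ} {P : TreeOrders n E} {T : Subtree n E}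
  {b : Fin (n+1) → ℕ} {S : Finset (Fin (n+1))} {j q w : Fin (n+1)} {k : ℕ}

theorem theta_of_par (h : T.par j = some (q, k)) :
    Theta E P T j = ∑ i ∈ univ.filter (P.lt T · q), E j i + k := by
  simp [Theta, thetaVal, h]

theorem theta_zero : Theta E P T 0 = 0 := by
  simp [Theta, T.root_par]

/-- `b j` counts the edges out of `j` below the tree edge of `T`, but only those into some set
`A ⊇ S`. For `b = Θ(T)` take `A = univ`; for the tree `T = Φ(b)` take `A` the vertex set at
the stage where `j` was added. -/
def RanksTreeEdges (P : TreeOrders n E) (T : Subtree n E) (b : Fin (n+1) → ℕ)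
    (S : Finset (Fin (n+1))) : Prop :=
  ∀ j ∉ S, ∃ q k, T.par j = some (q, k) ∧
    ∃ A, S ⊆ A ∧ b j = ∑ i ∈ A.filter (P.lt T · q), E j i + k

theorem ranksTreeEdges_theta (hT : T.IsSpanning) (hS : 0 ∈ S) :
    RanksTreeEdges P T (Theta E P T) S := by
  intro j hj
  obtain ⟨q, k, hpar⟩ := exists_par_of_mem (hT j) fun h => hj (h ▸ hS)
  exact ⟨q, k, hpar, univ, subset_univ S, theta_of_par hpar⟩

namespace RanksTreeEdges

theorem chosenEdge (hR : RanksTreeEdges P T b S) (hP : P.Proper) (hT : T.IsSpanning)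
    (hS : IsInitial (P.lt T) S) (hj : j ∉ S) (hel : b j < ∑ i ∈ S, E j i) :
    ∃ q k, T.par j = some (q, k) ∧ ChosenEdge E S (P.lt T) (b j) j q k := by
  obtain ⟨q, k, hpar, A, hSA, hb⟩ := hR j hj
  have hqS : q ∈ S := by
    by_contra hqS
    have : S ⊆ A.filter (P.lt T · q) := fun i hi => mem_filter.2 ⟨hSA hi, hS i hi q hqS⟩
    have := sum_le_sum_of_subset (f := E j) this
    omega
  refine ⟨q, k, hpar, hqS, T.edge_valid j q k hpar, ?_⟩
  rw [hb, hS.filter_eq ((hP.isStrictTotalOn_univ hT).mono (subset_univ A)) hSA hqS]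

theorem lt_sum_of_least (hR : RanksTreeEdges P T b S) (hP : P.Proper) (hT : T.IsSpanning)
    (hw : w ∉ S) (hleast : ∀ u ∉ S, u ≠ w → P.lt T w u) : b w < ∑ i ∈ S, E w i := by
  have hord := hP.isStrictTotalOn_univ hT
  have hmem : ∀ i, P.lt T i w → i ∈ S := fun i hiw => by
    by_contra hiS
    exact hord.asymm (mem_univ _) (mem_univ _) hiw (hleast i hiS (hord.ne_of_rel (mem_univ _) hiw))
  obtain ⟨q, k, hpar, A, -, hb⟩ := hR w hw
  have hqw := hP.lt_of_par hpar
  rw [hb]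
  refine sum_add_lt_sum_of_insert_subset (fun hq => hord.irrefl q (mem_univ _) (mem_filter.1 hq).2)
    (insert_subset_iff.2 ⟨hmem q hqw, fun i hi => hmem i ?_⟩) (T.edge_valid w q k hpar)
  exact hord.trans _ (mem_univ _) _ (mem_univ _) _ (mem_univ _) (mem_filter.1 hi).2 hqw

theorem par_eq {t : Subtree n E} (hR : RanksTreeEdges P T b t.verts) (hP : P.Proper)
    (hT : T.IsSpanning) (hsub : t.IsSubtreeOf T) (hinit : IsInitial (P.lt T) t.verts)
    (hj : j ∉ t.verts) (hel : b j < ∑ i ∈ t.verts, E j i)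
    (hch : ChosenEdge E t.verts (P.lt t) (b j) j q k) : T.par j = some (q, k) := by
  obtain ⟨q', k', hpar, hch'⟩ := hR.chosenEdge hP hT hinit hj hel
  obtain ⟨rfl, rfl⟩ := ChosenEdge.unique ((hP.isStrictTotalOn_univ hT).mono (subset_univ _))
    (hP.chosenEdge_of_isSubtreeOf hsub hch) hch'
  exact hpar

theorem isSubtreeOf_of_chosenEdge {t u : Subtree n E} (hR : RanksTreeEdges P T b t.verts)
    (hP : P.Proper) (hT : T.IsSpanning) (hsub : t.IsSubtreeOf T)
    (hinit : IsInitial (P.lt T) t.verts) (htu : t.IsSubtreeOf u)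
    (hnew : ∀ j, (u.par j).isSome → j ∉ t.verts → b j < ∑ i ∈ t.verts, E j i ∧
      ∃ q k, u.par j = some (q, k) ∧ ChosenEdge E t.verts (P.lt t) (b j) j q k) :
    u.IsSubtreeOf T := by
  intro v hv
  by_cases hvt : v ∈ t.verts
  · obtain ⟨⟨q, k⟩, hpar⟩ := Option.isSome_iff_exists.1 hv
    have hsome := isSome_par_of_mem hvt (ne_zero_of_par hpar)
    rw [← htu v hsome, hsub v hsome]
  · obtain ⟨hel, q, k, hpar, hch⟩ := hnew v hv hvt
    rw [hpar, hR.par_eq hP hT hsub hinit hvt hel hch]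

end RanksTreeEdges

theorem theta_isParking (hP : P.Proper) (hT : T.IsSpanning) : IsParking E (Theta E P T) := by
  intro U hU hU0
  obtain ⟨j, hjU, hleast⟩ := ((hP.isStrictTotalOn_univ hT).mono (subset_univ U)).exists_least hU
  exact ⟨j, hjU, (ranksTreeEdges_theta hT (mem_compl.2 hU0)).lt_sum_of_least hP hT
    (notMem_compl.2 hjU) fun u hu => hleast u (notMem_compl.1 hu)⟩

end Theta

namespace PhiRun

open Subtree

variable {n : ℕ} {E : Fin (n+1) → Fin (n+1) → ℕ} {P : TreeOrders n E}
  {b : Fin (n+1) → ℕ} (r : PhiRun E P b) {T : Subtree n E} {m : ℕ} {v : Fin (n+1)}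

theorem isSubtreeOf_succ (hm : m + 1 ≤ n) : (r.t m).IsSubtreeOf (r.t (m+1)) :=
  r.sub (m+1) (by omega) hm

theorem p_succ_notMem (hm : m + 1 ≤ n) : r.p (m+1) ∉ (r.t m).verts :=
  (r.newvert (m+1) (by omega) hm).1

theorem par_succ_of_ne (hm : m + 1 ≤ n) (hv : v ≠ r.p (m+1)) :
    (r.t (m+1)).par v = (r.t m).par v :=
  (r.newvert (m+1) (by omega) hm).2 v hv

theorem eligible_succ (hm : m + 1 ≤ n) :
    b (r.p (m+1)) < ∑ i ∈ (r.t m).verts, E (r.p (m+1)) i :=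
  r.eligible (m+1) (by omega) hm

theorem chosen_succ (hm : m + 1 ≤ n) : ∃ q k, (r.t (m+1)).par (r.p (m+1)) = some (q, k) ∧
    ChosenEdge E (r.t m).verts (P.lt (r.t m)) (b (r.p (m+1))) (r.p (m+1)) q k :=
  r.chosen (m+1) (by omega) hm

theorem verts_zero : (r.t 0).verts = {0} :=
  verts_eq_singleton r.init

theorem verts_succ (hm : m + 1 ≤ n) :
    (r.t (m+1)).verts = insert (r.p (m+1)) (r.t m).verts := by
  obtain ⟨q, k, hpar, -⟩ := r.chosen_succ hm
  ext v
  rcases eq_or_ne v (r.p (m+1)) with rfl | hv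
  · simp [mem_verts_of_par hpar]
  · rw [mem_verts, r.par_succ_of_ne hm hv, ← mem_verts, mem_insert, or_iff_right hv]

theorem card_verts : ∀ m ≤ n, #(r.t m).verts = m + 1 := by
  intro m
  induction m with
  | zero => exact fun _ => by rw [r.verts_zero, card_singleton]
  | succ m ih =>
    intro hm
    rw [r.verts_succ hm, card_insert_of_notMem (r.p_succ_notMem hm), ih (by omega)]

theorem isSpanning_top : (r.t n).IsSpanning := by
  have := eq_univ_of_card _ ((r.card_verts n le_rfl).trans (by simp))
  exact fun v => this ▸ mem_univ v

theorem isSubtreeOf_of_le {m m' : ℕ} (hmm' : m ≤ m') (hm' : m' ≤ n) :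
    (r.t m).IsSubtreeOf (r.t m') := by
  induction m', hmm' using Nat.le_induction with
  | base => exact .refl _
  | succ m' _ ih => exact (ih (by omega)).trans (r.isSubtreeOf_succ hm')

theorem exists_stage (hv : v ≠ 0) : ∃ M, M + 1 ≤ n ∧ r.p (M+1) = v := by
  suffices ∀ m ≤ n, v ∈ (r.t m).verts → ∃ M, M + 1 ≤ m ∧ r.p (M+1) = v by
    obtain ⟨M, hM, h⟩ := this n le_rfl (r.isSpanning_top v)
    exact ⟨M, hM, h⟩
  intro m
  induction m with
  | zero => simp [r.verts_zero, hv]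
  | succ m ih =>
    intro hm hvm
    rcases mem_insert.1 (r.verts_succ hm ▸ hvm) with rfl | hvm
    · exact ⟨m, le_rfl, rfl⟩
    · obtain ⟨M, hM, h⟩ := ih (by omega) hvm
      exact ⟨M, by omega, h⟩

theorem par_top (hP : P.Proper) (hv : v ≠ 0) :
    ∃ M, M + 1 ≤ n ∧ v ∈ (r.t (M+1)).verts ∧ ∃ q k, (r.t n).par v = some (q, k) ∧
      ChosenEdge E (r.t M).verts (P.lt (r.t n)) (b v) v q k := by
  obtain ⟨M, hM, rfl⟩ := r.exists_stage hv
  obtain ⟨q, k, hpar, hch⟩ := r.chosen_succ hM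
  refine ⟨M, hM, mem_verts_of_par hpar, q, k, ?_,
    hP.chosenEdge_of_isSubtreeOf (r.isSubtreeOf_of_le (by omega) le_rfl) hch⟩
  rw [← r.isSubtreeOf_of_le hM le_rfl _ (by simp [hpar]), hpar]

theorem ranksTreeEdges_top (hP : P.Proper) (hm : m ≤ n) :
    RanksTreeEdges P (r.t n) b (r.t m).verts := by
  intro j hj
  have hj0 : j ≠ 0 := by
    rintro rfl
    exact hj (zero_mem_verts _)
  obtain ⟨M, hM, hjM, q, k, hpar, hch⟩ := r.par_top hP hj0
  have hmM : m ≤ M := by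
    by_contra! h
    exact hj ((r.isSubtreeOf_of_le h hm).verts_subset hjM)
  exact ⟨q, k, hpar, (r.t M).verts, (r.isSubtreeOf_of_le hmM (by omega)).verts_subset,
    hch.2.2.symm⟩

theorem isSubtreeOf_succ_of_ranksTreeEdges (hP : P.Proper) (hT : T.IsSpanning)
    (hm : m + 1 ≤ n) (hsub : (r.t m).IsSubtreeOf T) (hinit : IsInitial (P.lt T) (r.t m).verts)
    (hR : RanksTreeEdges P T b (r.t m).verts) : (r.t (m+1)).IsSubtreeOf T := by
  refine hR.isSubtreeOf_of_chosenEdge hP hT hsub hinit (r.isSubtreeOf_succ hm) fun j hj hjm => ?_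
  obtain rfl : j = r.p (m+1) := by
    by_contra hjp
    rw [r.par_succ_of_ne hm hjp] at hj
    exact hjm (mem_verts.2 (.inr hj))
  exact ⟨r.eligible_succ hm, r.chosen_succ hm⟩

/-- The auxiliary tree of step `m + 1` lies inside `T`, so its order agrees with that of `T` on
the eligible vertices; since the `T`-least vertex outside `t m` is eligible, it is `p (m + 1)`. -/
theorem lt_p_succ_of_ranksTreeEdges (hP : P.Proper) (hT : T.IsSpanning)
    (hm : m + 1 ≤ n) (hsub : (r.t m).IsSubtreeOf T) (hinit : IsInitial (P.lt T) (r.t m).verts)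
    (hR : RanksTreeEdges P T b (r.t m).verts) :
    ∀ u ∉ (r.t m).verts, u ≠ r.p (m+1) → P.lt T (r.p (m+1)) u := by
  have hord := hP.isStrictTotalOn_univ hT
  obtain ⟨w, hwS, hleast⟩ := (hord.mono (subset_univ (r.t m).vertsᶜ)).exists_least
    ⟨r.p (m+1), mem_compl.2 (r.p_succ_notMem hm)⟩
  rw [mem_compl] at hwS
  replace hleast : ∀ u ∉ (r.t m).verts, u ≠ w → P.lt T w u :=
    fun u hu => hleast u (mem_compl.2 hu)
  have hwel := hR.lt_sum_of_least hP hT hwS hleast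
  obtain ⟨taux, htaux_sub, htaux_verts, htaux_par, htaux_min⟩ := r.minimal (m+1) (by omega) hm
  have htaux : taux.IsSubtreeOf T :=
    hR.isSubtreeOf_of_chosenEdge hP hT hsub hinit htaux_sub fun j hj hjm => by
      obtain ⟨-, hel⟩ := ((htaux_verts j).1 (mem_verts.2 (.inr hj))).resolve_left hjm
      exact ⟨hel, htaux_par j hjm hel⟩
  suffices r.p (m+1) = w from this ▸ hleast
  by_contra hpw
  have hp := r.p_succ_notMem hm
  have hlt := htaux_min w hwS hwel (Ne.symm hpw)
  rw [hP.lt_iff_of_isSubtreeOf htaux ((htaux_verts _).2 (.inr ⟨hp, r.eligible_succ hm⟩))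
    ((htaux_verts _).2 (.inr ⟨hwS, hwel⟩))] at hlt
  exact hord.asymm (mem_univ _) (mem_univ _) hlt (hleast _ hp hpw)

theorem isSubtreeOf_and_isInitial (hP : P.Proper) (hT : T.IsSpanning)
    (hR : ∀ m, m + 1 ≤ n → RanksTreeEdges P T b (r.t m).verts) :
    ∀ m ≤ n, (r.t m).IsSubtreeOf T ∧ IsInitial (P.lt T) (r.t m).verts := by
  intro m
  induction m with
  | zero =>
    refine fun _ => ⟨fun v hv => by simp [r.init v] at hv, ?_⟩
    rw [r.verts_zero]
    intro a ha u hu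
    rw [mem_singleton] at ha hu
    exact ha ▸ hP.root_lt (hT u) hu
  | succ m ih =>
    intro hm
    obtain ⟨hsub, hinit⟩ := ih (by omega)
    refine ⟨r.isSubtreeOf_succ_of_ranksTreeEdges hP hT hm hsub hinit (hR m hm), ?_⟩
    rw [r.verts_succ hm]
    intro a ha u hu
    rw [mem_insert, not_or] at hu
    rcases mem_insert.1 ha with rfl | ha
    · exact r.lt_p_succ_of_ranksTreeEdges hP hT hm hsub hinit (hR m hm) u hu.2 hu.1
    · exact hinit a ha u hu.2

theorem eq_of_ranksTreeEdges (hP : P.Proper) (hT : T.IsSpanning)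
    (hR : ∀ m, m + 1 ≤ n → RanksTreeEdges P T b (r.t m).verts) : r.t n = T := by
  have hsub := (r.isSubtreeOf_and_isInitial hP hT hR n le_rfl).1
  refine Subtree.ext (funext fun v => ?_)
  rcases mem_verts.1 (r.isSpanning_top v) with rfl | hv
  · rw [root_par, root_par]
  · exact hsub v hv

theorem eq_of_theta_eq (hP : P.Proper) (hT : T.IsSpanning) (hb : Theta E P T = b) :
    r.t n = T := by
  subst hb
  exact r.eq_of_ranksTreeEdges hP hT fun m _ => ranksTreeEdges_theta hT (zero_mem_verts _)

theorem theta_top (hP : P.Proper) (hb0 : b 0 = 0) : Theta E P (r.t n) = b := by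
  have hT := r.isSpanning_top
  have hinit M (hM : M ≤ n) := (r.isSubtreeOf_and_isInitial hP hT
    (fun m hm => r.ranksTreeEdges_top hP (by omega)) M hM).2
  funext j
  rcases eq_or_ne j 0 with rfl | hj0
  · rw [theta_zero, hb0]
  · obtain ⟨M, hM, -, q, k, hpar, hch⟩ := r.par_top hP hj0
    rw [theta_of_par hpar, (hinit M (by omega)).filter_eq (hP.isStrictTotalOn_univ hT)
      (subset_univ _) hch.1]
    exact hch.2.2

end PhiRun

section Construction

open Subtree

variable {n : ℕ} {E : Fin (n+1) → Fin (n+1) → ℕ} {P : TreeOrders n E}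
  {b : Fin (n+1) → ℕ} {t : Subtree n E} {j v : Fin (n+1)}

noncomputable def eligibleSet (b : Fin (n+1) → ℕ) (t : Subtree n E) : Finset (Fin (n+1)) :=
  univ.filter fun j => j ∉ t.verts ∧ b j + 1 ≤ ∑ i ∈ t.verts, E j i

theorem mem_eligibleSet :
    j ∈ eligibleSet b t ↔ j ∉ t.verts ∧ b j + 1 ≤ ∑ i ∈ t.verts, E j i := by
  simp [eligibleSet]

theorem eligibleSet_nonempty (hb : IsParking E b) (ht : #t.verts < n + 1) :
    (eligibleSet b t).Nonempty := by
  have ht' : t.verts ≠ univ := fun hu => by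
    rw [hu, card_univ, Fintype.card_fin] at ht
    omega
  obtain ⟨v, -, hv⟩ := exists_of_ssubset (ssubset_univ_iff.2 ht')
  obtain ⟨j, hj, hlt⟩ := hb t.vertsᶜ ⟨v, mem_compl.2 hv⟩ (notMem_compl.2 t.zero_mem_verts)
  rw [compl_compl] at hlt
  exact ⟨j, mem_eligibleSet.2 ⟨mem_compl.1 hj, hlt⟩⟩

noncomputable def chosenEdgeOf (P : TreeOrders n E) (b : Fin (n+1) → ℕ) (t : Subtree n E)
    (j : Fin (n+1)) : Fin (n+1) × ℕ :=
  if h : ∃ q k, ChosenEdge E t.verts (P.lt t) (b j) j q k then (h.choose, h.choose_spec.choose)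
  else (0, 0)

theorem chosenEdge_chosenEdgeOf (hP : P.Proper) (hj : j ∈ eligibleSet b t) :
    ChosenEdge E t.verts (P.lt t) (b j) j (chosenEdgeOf P b t j).1 (chosenEdgeOf P b t j).2 := by
  have h := ChosenEdge.exists (hP.isStrictTotalOn t) (mem_eligibleSet.1 hj).2
  rw [chosenEdgeOf, dif_pos h]
  exact h.choose_spec.choose_spec

theorem attach_eligibleSet_cond (hP : P.Proper) :
    ∀ j ∈ eligibleSet b t, j ∉ t.verts ∧ (chosenEdgeOf P b t j).1 ∈ t.verts ∧
      (chosenEdgeOf P b t j).2 < E j (chosenEdgeOf P b t j).1 :=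
  fun _ hj => ⟨(mem_eligibleSet.1 hj).1, (chosenEdge_chosenEdgeOf hP hj).1,
    (chosenEdge_chosenEdgeOf hP hj).2.1⟩

noncomputable def phiAux (hP : P.Proper) (b : Fin (n+1) → ℕ) (t : Subtree n E) : Subtree n E :=
  t.attach (eligibleSet b t) (chosenEdgeOf P b t) (attach_eligibleSet_cond hP)

theorem mem_phiAux_verts (hP : P.Proper) :
    j ∈ (phiAux hP b t).verts ↔ j ∈ t.verts ∨ j ∈ eligibleSet b t :=
  mem_attach_verts

noncomputable def phiNext (hP : P.Proper) (b : Fin (n+1) → ℕ) (t : Subtree n E) : Fin (n+1) :=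
  if h : ∃ p ∈ eligibleSet b t, ∀ j ∈ eligibleSet b t, j ≠ p → P.lt (phiAux hP b t) p j
  then h.choose else 0

theorem phiNext_spec (hP : P.Proper) (h : (eligibleSet b t).Nonempty) :
    phiNext hP b t ∈ eligibleSet b t ∧
      ∀ j ∈ eligibleSet b t, j ≠ phiNext hP b t →
        P.lt (phiAux hP b t) (phiNext hP b t) j := by
  have hex := ((hP.isStrictTotalOn (phiAux hP b t)).mono
    fun j hj => (mem_phiAux_verts hP).2 (.inr hj)).exists_least h
  rw [phiNext, dif_pos hex]
  exact hex.choose_spec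

noncomputable def phiStep (hP : P.Proper) (b : Fin (n+1) → ℕ) (t : Subtree n E) : Subtree n E :=
  t.attach ((eligibleSet b t).filter (· = phiNext hP b t)) (chosenEdgeOf P b t)
    fun j hj => attach_eligibleSet_cond hP j (mem_filter.1 hj).1

theorem isSubtreeOf_phiStep (hP : P.Proper) : t.IsSubtreeOf (phiStep hP b t) :=
  isSubtreeOf_attach

theorem phiStep_par_of_ne (hP : P.Proper) (hv : v ≠ phiNext hP b t) :
    (phiStep hP b t).par v = t.par v :=
  attach_par_of_notMem fun h => hv (mem_filter.1 h).2

theorem phiStep_par_phiNext (hP : P.Proper) (h : (eligibleSet b t).Nonempty) :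
    (phiStep hP b t).par (phiNext hP b t) = some (chosenEdgeOf P b t (phiNext hP b t)) :=
  attach_par_of_mem (mem_filter.2 ⟨(phiNext_spec hP h).1, rfl⟩)

theorem phiStep_verts (hP : P.Proper) (h : (eligibleSet b t).Nonempty) :
    (phiStep hP b t).verts = insert (phiNext hP b t) t.verts := by
  ext v
  rw [phiStep, mem_attach_verts, mem_insert, mem_filter]
  constructor
  · rintro (hv | ⟨-, rfl⟩) <;> simp [*]
  · rintro (rfl | hv)
    · exact .inr ⟨(phiNext_spec hP h).1, rfl⟩
    · exact .inl hv

noncomputable def phiTree (hP : P.Proper) (b : Fin (n+1) → ℕ) : ℕ → Subtree n E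
  | 0 => bot n E
  | m + 1 => phiStep hP b (phiTree hP b m)

theorem card_phiTree_verts (hP : P.Proper) (hb : IsParking E b) :
    ∀ m ≤ n, #(phiTree hP b m).verts = m + 1 := by
  intro m
  induction m with
  | zero => exact fun _ => by rw [phiTree, verts_eq_singleton fun _ => rfl, card_singleton]
  | succ m ih =>
    intro hm
    have hcard := ih (by omega)
    have h := eligibleSet_nonempty hb (t := phiTree hP b m) (by omega)
    rw [phiTree, phiStep_verts hP h,
      card_insert_of_notMem (mem_eligibleSet.1 (phiNext_spec hP h).1).1, hcard]

theorem eligibleSet_phiTree_nonempty (hP : P.Proper) (hb : IsParking E b) {m : ℕ}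
    (hm : m + 1 ≤ n) : (eligibleSet b (phiTree hP b m)).Nonempty :=
  eligibleSet_nonempty hb (by have := card_phiTree_verts hP hb m (by omega); omega)

noncomputable def phiRun (hP : P.Proper) (hb : IsParking E b) : PhiRun E P b where
  t := phiTree hP b
  p
    | 0 => 0
    | m + 1 => phiNext hP b (phiTree hP b m)
  init _ := rfl
  p0 := rfl
  sub := by
    rintro (_ | m) h1 -
    · omega
    · exact isSubtreeOf_phiStep hP
  newvert := by
    rintro (_ | m) h1 hm
    · omega
    · exact ⟨(mem_eligibleSet.1 (phiNext_spec hP (eligibleSet_phiTree_nonempty hP hb hm)).1).1,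
        fun v hv => phiStep_par_of_ne hP hv⟩
  eligible := by
    rintro (_ | m) h1 hm
    · omega
    · exact (mem_eligibleSet.1 (phiNext_spec hP (eligibleSet_phiTree_nonempty hP hb hm)).1).2
  chosen := by
    rintro (_ | m) h1 hm
    · omega
    · have h := eligibleSet_phiTree_nonempty hP hb hm
      exact ⟨_, _, phiStep_par_phiNext hP h, chosenEdge_chosenEdgeOf hP (phiNext_spec hP h).1⟩
  minimal := by
    rintro (_ | m) h1 hm
    · omega
    · have h := eligibleSet_phiTree_nonempty hP hb hm
      refine ⟨phiAux hP b (phiTree hP b m), isSubtreeOf_attach, fun j => ?_,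
        fun j hj hel => ?_,
        fun j hj hel => (phiNext_spec hP h).2 j (mem_eligibleSet.2 ⟨hj, hel⟩)⟩
      · rw [mem_phiAux_verts, mem_eligibleSet]
        exact Iff.rfl
      · have hj' := mem_eligibleSet.2 ⟨hj, hel⟩
        exact ⟨_, _, attach_par_of_mem hj', chosenEdge_chosenEdgeOf hP hj'⟩

end Construction

/-- Φ ∘ Θ = id: a run of the construction Φ on Θ(T') recovers the spanning
tree `T'`; consequently Θ is a bijection between the spanning trees of `G`
rooted at `0` and the `G`-parking functions. -/
theorem stmt_15 (n : ℕ) (E : Fin (n+1) → Fin (n+1) → ℕ)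
    (P : TreeOrders n E) (hP : P.Proper)
    (T' : Subtree n E) (hT' : T'.IsSpanning)
    (r : PhiRun E P (Theta E P T')) :
    (∀ v, (r.t n).par v = T'.par v) ∧
      Set.BijOn (Theta E P) {T : Subtree n E | T.IsSpanning}
        {b : Fin (n+1) → ℕ | IsParking E b ∧ b 0 = 0} := by
  refine ⟨fun v => by rw [r.eq_of_theta_eq hP hT' rfl],
    fun T hT => ⟨theta_isParking hP hT, theta_zero⟩, ?_, ?_⟩
  · intro T₁ h₁ T₂ h₂ h
    let r₁ := phiRun hP (theta_isParking hP h₁)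
    exact (r₁.eq_of_theta_eq hP h₁ rfl).symm.trans (r₁.eq_of_theta_eq hP h₂ h.symm)
  · rintro b ⟨hb, hb0⟩
    exact ⟨_, (phiRun hP hb).isSpanning_top, (phiRun hP hb).theta_top hP hb0⟩
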